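/- Let R be a reduced crystallographic root system in a finite-dimensional real inner product space E with base S and open fundamental Weyl chamber K(S) = {H ∈ E : ⟨α, H⟩ > 0 for all α ∈ S}. Let Σ ⊆ R be a Π-system and suppose H := κ(Σ) = Σ_{β ∈ R(Σ)₊} β* lies in K(S). Then Σ = S(H) = {α ∈ R : ⟨α, H⟩ = 2}; in particular Σ is the unique Π-system of R with κ(Σ) = H. -/

import Mathlib

/-! The inclusion `Σ ⊆ S(H)` holds for every Π-system: the reflection `s_α` in `α ∈ Σ` permutes
the positive roots of `R(Σ)` other than `α` and negates their pairing with `α`, so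
`⟪α, κ(Σ)⟫ = ⟪α, α*⟫ = 2`. This rests on `Σ` being a base of the roots in its integer span,
proved by induction on the `ℓ¹`-norm of the coefficients. Conversely, let `ξ ∈ R \ Σ` with
`⟪ξ, H⟫ = 2`. If `⟪ξ, β⟫ > 0` for some `β ∈ Σ`, then `ξ - β` is a root orthogonal to `H`, which is
impossible for `H` in the open chamber; so `ξ` is obtuse to `Σ`, hence to every positive root of
`R(Σ)`, and `⟪ξ, H⟫ ≤ 0`. -/

open scoped RealInnerProductSpace

/-- A reduced crystallographic root system in a real inner product space `E`:
a finite set of nonzero vectors, with integral Cartan numbers, closed under the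
reflections it defines, and such that the only multiples of a root `α` that are
roots are `±α`. -/
def IsRootSystem {E : Type*} [NormedAddCommGroup E] [InnerProductSpace ℝ E]
    (R : Set E) : Prop :=
  R.Finite ∧ (0 : E) ∉ R ∧
  (∀ α ∈ R, ∀ β ∈ R, ∃ n : ℤ, 2 * ⟪β, α⟫ / ⟪α, α⟫ = (n : ℝ)) ∧
  (∀ α ∈ R, ∀ β ∈ R, β - (2 * ⟪β, α⟫ / ⟪α, α⟫) • α ∈ R) ∧
  (∀ α ∈ R, ∀ t : ℝ, t • α ∈ R → t = 1 ∨ t = -1)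

/-- `S` is a base (simple system) of the root system `R`: a linearly independent
subset such that every root is an integer linear combination of elements of `S`
with coefficients all nonnegative or all nonpositive. -/
def IsBase {E : Type*} [NormedAddCommGroup E] [InnerProductSpace ℝ E]
    (R S : Set E) : Prop :=
  S ⊆ R ∧ LinearIndependent ℝ ((↑) : S → E) ∧
  ∀ β ∈ R, ∃ c : E →₀ ℤ, ↑c.support ⊆ S ∧
    β = c.sum (fun α n => (n : ℝ) • α) ∧
    ((∀ α, 0 ≤ c α) ∨ (∀ α, c α ≤ 0))

/-- The reflection `s_β : x ↦ x - (2⟪x,β⟫/⟪β,β⟫) β` in the hyperplane orthogonal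
to `β`, as an element of the monoid `Function.End E` of self-maps of `E`. -/
noncomputable def sRefl {E : Type*} [NormedAddCommGroup E] [InnerProductSpace ℝ E]
    (β : E) : Function.End E :=
  fun x => x - (2 * ⟪x, β⟫ / ⟪β, β⟫) • β

/-- The set of all images of elements of `Sg` under the group generated by the
reflections `s_β`, `β ∈ Sg` (since each reflection is an involution, this group
coincides with the generated monoid of self-maps). -/
noncomputable def subSystem {E : Type*} [NormedAddCommGroup E] [InnerProductSpace ℝ E]
    (Sg : Set E) : Set E :=
  {x | ∃ w ∈ Submonoid.closure (sRefl '' Sg), ∃ α ∈ Sg, x = w α}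

/-- `β` is an integer linear combination of elements of `S'` with all
coefficients nonnegative. -/
def IsNonnegCombo {E : Type*} [NormedAddCommGroup E] [InnerProductSpace ℝ E]
    (S' : Set E) (β : E) : Prop :=
  ∃ c : E →₀ ℤ, ↑c.support ⊆ S' ∧ β = c.sum (fun α n => (n : ℝ) • α) ∧ ∀ α, 0 ≤ c α

/-- The inverse root `α* = 2α/⟪α,α⟫`. -/
noncomputable def invRoot {E : Type*} [NormedAddCommGroup E] [InnerProductSpace ℝ E]
    (α : E) : E :=
  (2 / ⟪α, α⟫) • α
/-- A Π-system of the root system `R`: a linearly independent subset `Sg ⊆ R`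
such that `α - β` is not a root for all `α, β ∈ Sg`. -/
def IsPiSys {E : Type*} [NormedAddCommGroup E] [InnerProductSpace ℝ E]
    (R Sg : Set E) : Prop :=
  Sg ⊆ R ∧ LinearIndependent ℝ ((↑) : Sg → E) ∧ ∀ α ∈ Sg, ∀ β ∈ Sg, α - β ∉ R

open Finsupp

section Reflection

variable {E : Type*} [NormedAddCommGroup E] [InnerProductSpace ℝ E] {β : E}

lemma sRefl_apply (β x : E) : sRefl β x = x - (2 * ⟪x, β⟫ / ⟪β, β⟫) • β := rfl

lemma sRefl_self (hβ : β ≠ 0) : sRefl β β = -β := by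
  have : ⟪β, β⟫ ≠ 0 := inner_self_ne_zero.2 hβ
  rw [sRefl_apply, mul_div_assoc, div_self this, mul_one, two_smul]
  abel

lemma inner_sRefl_left_self (hβ : β ≠ 0) (x : E) : ⟪sRefl β x, β⟫ = -⟪x, β⟫ := by
  have : ⟪β, β⟫ ≠ 0 := inner_self_ne_zero.2 hβ
  rw [sRefl_apply, inner_sub_left, real_inner_smul_left]
  field_simp
  ring

lemma sRefl_sRefl (hβ : β ≠ 0) (x : E) : sRefl β (sRefl β x) = x := by
  rw [sRefl_apply β (sRefl β x), inner_sRefl_left_self hβ, sRefl_apply, mul_neg, neg_div,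
    neg_smul]
  abel

lemma inner_sRefl_sRefl (hβ : β ≠ 0) (x y : E) : ⟪sRefl β x, sRefl β y⟫ = ⟪x, y⟫ := by
  have : ⟪β, β⟫ ≠ 0 := inner_self_ne_zero.2 hβ
  rw [sRefl_apply β y, inner_sub_right, real_inner_smul_right, inner_sRefl_left_self hβ,
    sRefl_apply, inner_sub_left, real_inner_smul_left, real_inner_comm β y]
  field_simp
  ring

lemma inner_invRoot_self (hβ : β ≠ 0) : ⟪β, invRoot β⟫ = 2 := by
  have : ⟪β, β⟫ ≠ 0 := inner_self_ne_zero.2 hβ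
  rw [invRoot, real_inner_smul_right, div_mul_cancel₀ _ this]

lemma inner_invRoot_sRefl (hβ : β ≠ 0) (x : E) :
    ⟪β, invRoot (sRefl β x)⟫ = -⟪β, invRoot x⟫ := by
  rw [invRoot, invRoot, real_inner_smul_right, real_inner_smul_right, inner_sRefl_sRefl hβ,
    real_inner_comm (sRefl β x), inner_sRefl_left_self hβ, real_inner_comm β x]
  ring

end Reflection

section NatAbsSum

variable {ι : Type*}

lemma sum_natAbs_neg (c : ι →₀ ℤ) :
    (-c).sum (fun _ n => n.natAbs) = c.sum fun _ n => n.natAbs := by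
  simp [sum_neg_index]

lemma sum_natAbs_sub_single_lt {c : ι →₀ ℤ} {β : ι} (hβ : 0 < c β) :
    (c - single β 1).sum (fun _ n => n.natAbs) < c.sum fun _ n => n.natAbs := by
  classical
  have hsupp : (c - single β 1).support ⊆ c.support := by
    intro x hx
    rw [mem_support_iff] at hx ⊢
    by_cases hxβ : x = β
    · exact hxβ ▸ hβ.ne'
    · simpa [single_apply, Ne.symm hxβ] using hx
  rw [sum_of_support_subset _ hsupp _ fun _ _ => rfl, Finsupp.sum]
  refine Finset.sum_lt_sum (fun x _ => ?_) ⟨β, mem_support_iff.2 hβ.ne', ?_⟩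
  · rcases eq_or_ne x β with rfl | hxβ
    · simp only [coe_sub, Pi.sub_apply, single_eq_same]
      omega
    · simp [hxβ.symm]
  · simp only [coe_sub, Pi.sub_apply, single_eq_same]
    omega

end NatAbsSum

section IntegerCombination

variable {E : Type*} [NormedAddCommGroup E] [InnerProductSpace ℝ E]

lemma sum_intCast_smul_eq_linearCombination (c : E →₀ ℤ) :
    c.sum (fun α n => (n : ℝ) • α) = linearCombination ℤ id c := by
  simp [linearCombination_apply, Int.cast_smul_eq_zsmul]

lemma isNonnegCombo_iff {S : Set E} {β : E} :
    IsNonnegCombo S β ↔ ∃ c ∈ supported ℤ ℤ S, 0 ≤ c ∧ linearCombination ℤ id c = β := by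
  simp only [IsNonnegCombo, sum_intCast_smul_eq_linearCombination, mem_supported, le_def,
    coe_zero, Pi.zero_apply, eq_comm (a := β)]
  tauto

lemma IsBase.exists_linearCombination_eq {R S : Set E} (hS : IsBase R S) {β : E} (hβ : β ∈ R) :
    ∃ c ∈ supported ℤ ℤ S, linearCombination ℤ id c = β ∧ (0 ≤ c ∨ c ≤ 0) := by
  obtain ⟨c, hcS, hc, hsign⟩ := hS.2.2 β hβ
  exact ⟨c, hcS, by rw [hc, sum_intCast_smul_eq_linearCombination], by simpa [le_def] using hsign⟩

lemma inner_linearCombination_left (c : E →₀ ℤ) (y : E) :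
    ⟪linearCombination ℤ id c, y⟫ = c.sum fun x n => n * ⟪x, y⟫ := by
  simp [linearCombination_apply, Finsupp.sum, sum_inner, ← Int.cast_smul_eq_zsmul ℝ,
    real_inner_smul_left]

lemma inner_linearCombination_nonpos {c : E →₀ ℤ} (hc : 0 ≤ c) {y : E}
    (hy : ∀ x ∈ c.support, ⟪x, y⟫ ≤ 0) : ⟪linearCombination ℤ id c, y⟫ ≤ 0 := by
  rw [inner_linearCombination_left]
  exact Finset.sum_nonpos fun x hx =>
    mul_nonpos_of_nonneg_of_nonpos (by exact_mod_cast hc x) (hy x hx)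

lemma inner_linearCombination_pos {c : E →₀ ℤ} (hc : 0 ≤ c) (hc₀ : c ≠ 0) {y : E}
    (hy : ∀ x ∈ c.support, 0 < ⟪x, y⟫) : 0 < ⟪linearCombination ℤ id c, y⟫ := by
  rw [inner_linearCombination_left]
  refine Finset.sum_pos (fun x hx => mul_pos ?_ (hy x hx)) (support_nonempty_iff.2 hc₀)
  exact_mod_cast (hc x).lt_of_ne (mem_support_iff.1 hx).symm

lemma inner_linearCombination_nonpos_of_disjoint {S : Set E}
    (hS : S.Pairwise fun x y => ⟪x, y⟫ ≤ 0) {a b : E →₀ ℤ} (ha : a ∈ supported ℤ ℤ S)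
    (hb : b ∈ supported ℤ ℤ S) (ha₀ : 0 ≤ a) (hb₀ : 0 ≤ b) (hab : ∀ x, a x = 0 ∨ b x = 0) :
    ⟪linearCombination ℤ id a, linearCombination ℤ id b⟫ ≤ 0 := by
  refine inner_linearCombination_nonpos ha₀ fun x hx => ?_
  rw [real_inner_comm]
  refine inner_linearCombination_nonpos hb₀ fun y hy => ?_
  refine hS (mem_supported ℤ b |>.1 hb hy) (mem_supported ℤ a |>.1 ha hx) ?_
  rintro rfl
  exact (hab y).elim (mem_support_iff.1 hx) (mem_support_iff.1 hy)

end IntegerCombination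

section RootSystem

variable {E : Type*} [NormedAddCommGroup E] [InnerProductSpace ℝ E] {R : Set E} {α β : E}

lemma IsRootSystem.ne_zero (hR : IsRootSystem R) (hα : α ∈ R) : α ≠ 0 :=
  fun h => hR.2.1 (h ▸ hα)

lemma IsRootSystem.sRefl_mem (hR : IsRootSystem R) (hα : α ∈ R) (hβ : β ∈ R) :
    sRefl α β ∈ R :=
  hR.2.2.2.1 α hα β hβ

lemma IsRootSystem.neg_mem (hR : IsRootSystem R) (hα : α ∈ R) : -α ∈ R :=
  sRefl_self (hR.ne_zero hα) ▸ hR.sRefl_mem hα hα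

/-- The Cartan integers of two distinct roots with positive inner product cannot both be `≥ 2`,
since otherwise `‖α - β‖² = ‖α‖² + ‖β‖² - 2⟪α, β⟫ ≤ 0`; a Cartan integer `1` is a reflection
`α ↦ α - β`. -/
lemma IsRootSystem.sub_mem_of_inner_pos (hR : IsRootSystem R) (hα : α ∈ R) (hβ : β ∈ R)
    (hne : α ≠ β) (hpos : 0 < ⟪α, β⟫) : α - β ∈ R := by
  have hαα : 0 < ⟪α, α⟫ := real_inner_self_pos.2 (hR.ne_zero hα)
  have hββ : 0 < ⟪β, β⟫ := real_inner_self_pos.2 (hR.ne_zero hβ)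
  have hβα : 0 < ⟪β, α⟫ := real_inner_comm α β ▸ hpos
  obtain ⟨m, hm⟩ := hR.2.2.1 β hβ α hα
  obtain ⟨m', hm'⟩ := hR.2.2.1 α hα β hβ
  rcases eq_or_ne m 1 with rfl | hm₁
  · have := hR.sRefl_mem hβ hα
    rwa [sRefl_apply, hm, Int.cast_one, one_smul] at this
  rcases eq_or_ne m' 1 with rfl | hm'₁
  · have := hR.neg_mem (hR.sRefl_mem hα hβ)
    rwa [sRefl_apply, hm', Int.cast_one, one_smul, neg_sub] at this
  have hm₀ : (0 : ℝ) < m := hm ▸ by positivity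
  have hm'₀ : (0 : ℝ) < m' := hm' ▸ by positivity
  have hm₂ : (2 : ℝ) ≤ m := by
    have : 0 < m := by exact_mod_cast hm₀
    exact_mod_cast (show (2 : ℤ) ≤ m by omega)
  have hm'₂ : (2 : ℝ) ≤ m' := by
    have : 0 < m' := by exact_mod_cast hm'₀
    exact_mod_cast (show (2 : ℤ) ≤ m' by omega)
  rw [div_eq_iff hββ.ne'] at hm
  rw [div_eq_iff hαα.ne', real_inner_comm] at hm'
  have : 0 < ⟪α - β, α - β⟫ := real_inner_self_pos.2 (sub_ne_zero.2 hne)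
  rw [inner_sub_sub_self, real_inner_comm α β] at this
  nlinarith [mul_le_mul_of_nonneg_right hm₂ hββ.le, mul_le_mul_of_nonneg_right hm'₂ hαα.le]

lemma IsBase.inner_ne_zero {S : Set E} (hR : IsRootSystem R) (hS : IsBase R S) {H : E}
    (hH : ∀ α ∈ S, 0 < ⟪α, H⟫) (hξ : α ∈ R) : ⟪α, H⟫ ≠ 0 := by
  obtain ⟨c, hcS, rfl, hsign⟩ := hS.exists_linearCombination_eq hξ
  have hc₀ : c ≠ 0 := by rintro rfl; exact hR.ne_zero hξ (map_zero _)
  have hH' : ∀ x ∈ c.support, 0 < ⟪x, H⟫ := fun x hx => hH x ((mem_supported ℤ c).1 hcS hx)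
  rcases hsign with hc | hc
  · exact (inner_linearCombination_pos hc hc₀ hH').ne'
  · have := inner_linearCombination_pos (neg_nonneg.2 hc) (neg_ne_zero.2 hc₀)
      (by simpa using hH')
    rw [map_neg, inner_neg_left] at this
    linarith

end RootSystem

section SubSystem

variable {E : Type*} [NormedAddCommGroup E] [InnerProductSpace ℝ E] {R Sg : Set E} {β : E}

lemma self_subset_subSystem (Sg : Set E) : Sg ⊆ subSystem Sg :=
  fun β hβ => ⟨1, one_mem _, β, hβ, rfl⟩

lemma sRefl_mem_subSystem (hβ : β ∈ Sg) {x : E} (hx : x ∈ subSystem Sg) :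
    sRefl β x ∈ subSystem Sg := by
  obtain ⟨w, hw, α, hα, rfl⟩ := hx
  exact ⟨sRefl β * w, mul_mem (Submonoid.subset_closure ⟨β, hβ, rfl⟩) hw, α, hα, rfl⟩

lemma IsRootSystem.subSystem_subset (hR : IsRootSystem R) (hSg : Sg ⊆ R) : subSystem Sg ⊆ R := by
  rintro _ ⟨w, hw, α, hα, rfl⟩
  suffices ∀ x ∈ R, w x ∈ R from this α (hSg hα)
  induction hw using Submonoid.closure_induction with
  | mem g hg =>
    obtain ⟨β, hβ, rfl⟩ := hg
    exact fun x hx => hR.sRefl_mem (hSg hβ) hx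
  | one => exact fun x hx => hx
  | mul g₁ g₂ _ _ ih₁ ih₂ => exact fun x hx => ih₁ _ (ih₂ x hx)

end SubSystem

section PiSystem

variable {E : Type*} [NormedAddCommGroup E] [InnerProductSpace ℝ E] {R Sg : Set E} {α : E}

lemma IsPiSys.pairwise_inner_nonpos (hR : IsRootSystem R) (hSg : IsPiSys R Sg) :
    Sg.Pairwise fun x y => ⟪x, y⟫ ≤ 0 := fun x hx y hy hne =>
  not_lt.1 fun hpos => hSg.2.2 x hx y hy (hR.sub_mem_of_inner_pos (hSg.1 hx) (hSg.1 hy) hne hpos)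

lemma IsPiSys.linearCombination_injOn (hSg : IsPiSys R Sg) {a b : E →₀ ℤ}
    (ha : a ∈ supported ℤ ℤ Sg) (hb : b ∈ supported ℤ ℤ Sg)
    (h : linearCombination ℤ id a = linearCombination ℤ id b) : a = b :=
  linearIndepOn_iffₛ.1 (show LinearIndepOn ℤ id Sg from hSg.2.1.restrict_scalars' ℤ) a ha b hb h

/-- Splitting `c = c⁺ - c⁻`, the cross term `-⟪c⁻, c⁺⟫` is nonnegative, so
`⟪c, c⁺⟫ ≥ ‖c⁺‖² > 0`. -/
lemma IsPiSys.exists_pos_inner_pos (hR : IsRootSystem R) (hSg : IsPiSys R Sg) {c : E →₀ ℤ}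
    (hc : c ∈ supported ℤ ℤ Sg) (hpos : ¬c ≤ 0) :
    ∃ β ∈ Sg, 0 < c β ∧ 0 < ⟪linearCombination ℤ id c, β⟫ := by
  set L := linearCombination ℤ (id : E → E)
  have hsupp : ∀ d : E →₀ ℤ, (∀ x, c x = 0 → d x = 0) → d ∈ supported ℤ ℤ Sg :=
    fun d hd => (mem_supported' ℤ d).2 fun x hx => hd x ((mem_supported' ℤ c).1 hc x hx)
  have hpos_apply (x : E) : c⁺ x = (c x)⁺ := rfl
  have hneg_apply (x : E) : c⁻ x = (c x)⁻ := rfl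
  have hp : c⁺ ∈ supported ℤ ℤ Sg := hsupp _ fun x hx => by simp [hpos_apply, hx]
  have hn : c⁻ ∈ supported ℤ ℤ Sg := hsupp _ fun x hx => by simp [hneg_apply, hx]
  have hLp : L c⁺ ≠ 0 := by
    intro h
    have : c⁺ = 0 := hSg.linearCombination_injOn hp (zero_mem _) (by rw [h, map_zero])
    exact hpos (posPart_eq_zero.1 this)
  have hcross : ⟪L c⁻, L c⁺⟫ ≤ 0 :=
    inner_linearCombination_nonpos_of_disjoint (hSg.pairwise_inner_nonpos hR) hn hp
      (negPart_nonneg c) (posPart_nonneg c) fun x => by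
        rcases le_total (c x) 0 with h | h <;> simp [hpos_apply, hneg_apply, h]
  have hinner : 0 < ⟪L c⁺, L c⟫ := by
    have hdec : L c = L c⁺ - L c⁻ := by rw [← map_sub, posPart_sub_negPart]
    rw [real_inner_comm, hdec, inner_sub_left]
    linarith [real_inner_self_pos.2 hLp]
  by_contra! h
  refine hinner.not_ge (inner_linearCombination_nonpos (posPart_nonneg c) fun x hx => ?_)
  have hcx : 0 < c x := by simpa [hpos_apply] using mem_support_iff.1 hx
  rw [real_inner_comm]
  exact h x ((mem_supported ℤ _).1 hp hx) hcx

/-- If `c` has coefficients of both signs, then by `exists_pos_inner_pos` and induction applied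
to `c - single β 1` and to `-c - single β' 1`, it must be `single β 1 - single β' 1`, and then
`β - β' ∈ R` contradicts the Π-system property. -/
theorem IsPiSys.nonneg_or_nonpos (hR : IsRootSystem R) (hSg : IsPiSys R Sg) {c : E →₀ ℤ}
    (hc : c ∈ supported ℤ ℤ Sg) (hcR : linearCombination ℤ id c ∈ R) : 0 ≤ c ∨ c ≤ 0 := by
  induction hn : c.sum (fun _ n => n.natAbs) using Nat.strong_induction_on generalizing c with
  | _ n ih =>
  have step : ∀ d ∈ supported ℤ ℤ Sg, linearCombination ℤ id d ∈ R →
      d.sum (fun _ n => n.natAbs) = n → ¬0 ≤ d → ¬d ≤ 0 →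
      ∃ β ∈ Sg, d β = 1 ∧ ∀ x ≠ β, d x ≤ 0 := by
    intro d hd hdR hdn hd₀ hd₀'
    obtain ⟨β, hβ, hdβ, hinner⟩ := hSg.exists_pos_inner_pos hR hd hd₀'
    have hβd : single β 1 ∈ supported ℤ ℤ Sg := single_mem_supported ℤ 1 hβ
    have hne : linearCombination ℤ id d ≠ β := fun h =>
      hd₀ (hSg.linearCombination_injOn hd hβd (by simpa using h) ▸ single_nonneg.2 zero_le_one)
    have hsubR : linearCombination ℤ id (d - single β 1) ∈ R := by
      simpa using hR.sub_mem_of_inner_pos hdR (hSg.1 hβ) hne hinner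
    obtain ⟨y, hy⟩ : ∃ y, d y < 0 := by simpa [le_def] using hd₀
    rcases ih _ (hdn ▸ sum_natAbs_sub_single_lt hdβ) (sub_mem hd hβd) hsubR rfl with h | h
    · have hyβ : y ≠ β := by rintro rfl; omega
      have := h y
      simp [hyβ.symm] at this
      omega
    · refine ⟨β, hβ, ?_, fun x hx => by simpa [single_apply, hx.symm] using h x⟩
      have := h β
      simp at this
      omega
  by_contra hmix
  rw [not_or] at hmix
  obtain ⟨β, hβ, hcβ, hc_le⟩ := step c hc hcR hn hmix.1 hmix.2
  obtain ⟨β', hβ', hcβ', hc_ge⟩ := step (-c) (neg_mem hc) (by simpa using hR.neg_mem hcR)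
    (by rw [sum_natAbs_neg, hn]) (by simpa using hmix.2) (by simpa using hmix.1)
  have hc_eq : c = single β 1 - single β' 1 := by
    simp only [coe_neg, Pi.neg_apply, neg_nonpos] at hcβ' hc_ge
    ext x
    rcases eq_or_ne x β with rfl | hxβ
    · have hxβ' : x ≠ β' := by rintro rfl; omega
      simp [hcβ, hxβ'.symm]
    rcases eq_or_ne x β' with rfl | hxβ'
    · simp [hxβ.symm]
      omega
    · simp [hxβ.symm, hxβ'.symm]
      exact le_antisymm (hc_le x hxβ) (hc_ge x hxβ')
  apply hSg.2.2 β hβ β' hβ'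
  simpa [hc_eq] using hcR

lemma IsPiSys.not_isNonnegCombo_neg (hSg : IsPiSys R Sg) (hα : α ∈ Sg) :
    ¬IsNonnegCombo Sg (-α) := by
  rw [isNonnegCombo_iff]
  rintro ⟨c, hc, hc₀, hcα⟩
  have : c = -single α 1 :=
    hSg.linearCombination_injOn hc (neg_mem (single_mem_supported ℤ 1 hα)) (by simp [hcα])
  simpa [this] using hc₀ α

lemma IsPiSys.isNonnegCombo_sRefl (hR : IsRootSystem R) (hSg : IsPiSys R Sg) (hα : α ∈ Sg)
    {γ : E} (hγR : γ ∈ R) (hγ : IsNonnegCombo Sg γ) (hne : γ ≠ α) :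
    IsNonnegCombo Sg (sRefl α γ) := by
  obtain ⟨c, hc, hc₀, rfl⟩ := isNonnegCombo_iff.1 hγ
  obtain ⟨m, hm⟩ := hR.2.2.1 α (hSg.1 hα) _ hγR
  have hαm : single α m ∈ supported ℤ ℤ Sg := single_mem_supported ℤ m hα
  have hrefl : sRefl α (linearCombination ℤ id c) = linearCombination ℤ id (c - single α m) := by
    rw [sRefl_apply, hm, map_sub, linearCombination_single, id, Int.cast_smul_eq_zsmul]
  refine isNonnegCombo_iff.2 ⟨_, sub_mem hc hαm, ?_, hrefl.symm⟩
  refine (hSg.nonneg_or_nonpos hR (sub_mem hc hαm) (hrefl ▸ hR.sRefl_mem (hSg.1 hα) hγR))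
    |>.resolve_right fun hle => hne ?_
  -- `c` is supported on `{α}`, and reducedness leaves only `c = single α 1`
  have hc_eq : c = single α (c α) := by
    ext x
    rcases eq_or_ne x α with rfl | hx
    · simp
    · have := hle x
      simp [hx.symm] at this ⊢
      exact le_antisymm this (le_def.1 hc₀ x)
  have hγ : linearCombination ℤ id c = (c α : ℝ) • α := by
    conv_lhs => rw [hc_eq]
    simp [Int.cast_smul_eq_zsmul]
  rcases hR.2.2.2.2 α (hSg.1 hα) _ (hγ ▸ hγR) with h | h
  · rw [hγ, h, one_smul]
  · have : c α = -1 := by exact_mod_cast h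
    have h₀ : 0 ≤ c α := le_def.1 hc₀ α
    omega

theorem IsPiSys.inner_sum_invRoot_eq_two (hR : IsRootSystem R) (hSg : IsPiSys R Sg) {P : Finset E}
    (hP : ↑P = {β ∈ subSystem Sg | IsNonnegCombo Sg β}) (hα : α ∈ Sg) :
    ⟪α, ∑ β ∈ P, invRoot β⟫ = 2 := by
  classical
  have hα₀ : α ≠ 0 := hR.ne_zero (hSg.1 hα)
  have memP (x : E) : x ∈ P ↔ x ∈ subSystem Sg ∧ IsNonnegCombo Sg x := by
    rw [← Finset.mem_coe, hP]
    rfl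
  have hαP : α ∈ P := (memP α).2 ⟨self_subset_subSystem Sg hα, isNonnegCombo_iff.2
    ⟨single α 1, single_mem_supported ℤ 1 hα, single_nonneg.2 zero_le_one, by simp⟩⟩
  have hmaps : ∀ γ ∈ P.erase α, sRefl α γ ∈ P.erase α := by
    intro γ hγ
    obtain ⟨hγα, hγP⟩ := Finset.mem_erase.1 hγ
    obtain ⟨hγS, hγ⟩ := (memP γ).1 hγP
    refine Finset.mem_erase.2 ⟨fun h => hSg.not_isNonnegCombo_neg hα ?_, (memP _).2
      ⟨sRefl_mem_subSystem hα hγS,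
        hSg.isNonnegCombo_sRefl hR hα (hR.subSystem_subset hSg.1 hγS) hγ hγα⟩⟩
    have : γ = -α := by rw [← sRefl_sRefl hα₀ γ, h, sRefl_self hα₀]
    exact this ▸ hγ
  have hsum : ∑ γ ∈ P.erase α, ⟪α, invRoot γ⟫ = 0 := by
    have := Finset.sum_nbij' (sRefl α) (sRefl α) hmaps hmaps (fun γ _ => sRefl_sRefl hα₀ γ)
      (fun γ _ => sRefl_sRefl hα₀ γ) (f := fun γ => ⟪α, invRoot γ⟫)
      (g := fun γ => -⟪α, invRoot γ⟫) fun γ _ => by rw [inner_invRoot_sRefl hα₀, neg_neg]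
    rw [Finset.sum_neg_distrib] at this
    linarith
  rw [inner_sum, ← Finset.add_sum_erase _ _ hαP, hsum, add_zero, inner_invRoot_self hα₀]

theorem IsPiSys.eq_setOf_inner_eq_two (hR : IsRootSystem R) {S : Set E} (hS : IsBase R S)
    (hSg : IsPiSys R Sg) {P : Finset E} (hP : ↑P = {β ∈ subSystem Sg | IsNonnegCombo Sg β})
    {H : E} (hH : H = ∑ β ∈ P, invRoot β) (hchamber : ∀ α ∈ S, 0 < ⟪α, H⟫) :
    Sg = {α ∈ R | ⟪α, H⟫ = 2} := by
  subst hH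
  refine Set.Subset.antisymm (fun α hα => ⟨hSg.1 hα, hSg.inner_sum_invRoot_eq_two hR hP hα⟩) ?_
  rintro ξ ⟨hξR, hξ⟩
  by_contra hξS
  have hobtuse : ∀ β ∈ Sg, ⟪β, ξ⟫ ≤ 0 := by
    intro β hβ
    by_contra! hpos
    rw [real_inner_comm] at hpos
    apply hS.inner_ne_zero hR hchamber
      (hR.sub_mem_of_inner_pos hξR (hSg.1 hβ) (fun h => hξS (h ▸ hβ)) hpos)
    rw [inner_sub_left, hξ, hSg.inner_sum_invRoot_eq_two hR hP hβ, sub_self]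
  have : ⟪ξ, ∑ β ∈ P, invRoot β⟫ ≤ 0 := by
    rw [inner_sum]
    refine Finset.sum_nonpos fun γ hγ => ?_
    obtain ⟨-, hγ⟩ : γ ∈ {β ∈ subSystem Sg | IsNonnegCombo Sg β} := hP ▸ hγ
    obtain ⟨c, hc, hc₀, rfl⟩ := isNonnegCombo_iff.1 hγ
    rw [invRoot, real_inner_smul_right, real_inner_comm _ ξ]
    exact mul_nonpos_of_nonneg_of_nonpos (div_nonneg zero_le_two real_inner_self_nonneg)
      (inner_linearCombination_nonpos hc₀ fun x hx => hobtuse x ((mem_supported ℤ c).1 hc hx))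
  linarith

end PiSystem

theorem piSystem_eq_SH_of_kappa_in_chamber_general
    {E : Type*} [NormedAddCommGroup E] [InnerProductSpace ℝ E]
    (R S : Set E) (hR : IsRootSystem R) (hS : IsBase R S)
    (Sg : Set E) (hSg : IsPiSys R Sg)
    (P : Finset E) (hP : ↑P = {β ∈ subSystem Sg | IsNonnegCombo Sg β})
    (H : E) (hH : H = ∑ β ∈ P, invRoot β)
    (hchamber : ∀ α ∈ S, 0 < ⟪α, H⟫) :
    Sg = {α ∈ R | ⟪α, H⟫ = 2} ∧
    ∀ Sg₂ : Set E, IsPiSys R Sg₂ →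
      (∃ P₂ : Finset E, ↑P₂ = {β ∈ subSystem Sg₂ | IsNonnegCombo Sg₂ β} ∧
        ∑ β ∈ P₂, invRoot β = H) →
      Sg₂ = Sg := by
  have hSgH := hSg.eq_setOf_inner_eq_two hR hS hP hH hchamber
  refine ⟨hSgH, fun Sg₂ hSg₂ ⟨P₂, hP₂, hH₂⟩ => ?_⟩
  rw [hSgH, hSg₂.eq_setOf_inner_eq_two hR hS hP₂ hH₂.symm hchamber]

/-- If `Sg` is a Π-system of `R` whose associated vector
`H = κ(Sg) = Σ_{β ∈ R(Sg)₊} β*` lies in the open fundamental Weyl chamber `K(S)`,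
then `Sg = S(H) = {α ∈ R : ⟪α, H⟫ = 2}`; in particular `Sg` is the unique
Π-system of `R` with `κ(Sg) = H`. -/
theorem piSystem_eq_SH_of_kappa_in_chamber
    {E : Type*} [NormedAddCommGroup E] [InnerProductSpace ℝ E] [FiniteDimensional ℝ E]
    (R S : Set E) (hR : IsRootSystem R) (hS : IsBase R S)
    (Sg : Set E) (hSg : IsPiSys R Sg)
    (P : Finset E) (hP : ↑P = {β ∈ subSystem Sg | IsNonnegCombo Sg β})
    (H : E) (hH : H = ∑ β ∈ P, invRoot β)
    (hchamber : ∀ α ∈ S, 0 < ⟪α, H⟫) :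
    Sg = {α ∈ R | ⟪α, H⟫ = 2} ∧
    ∀ Sg₂ : Set E, IsPiSys R Sg₂ →
      (∃ P₂ : Finset E, ↑P₂ = {β ∈ subSystem Sg₂ | IsNonnegCombo Sg₂ β} ∧
        ∑ β ∈ P₂, invRoot β = H) →
      Sg₂ = Sg :=
  piSystem_eq_SH_of_kappa_in_chamber_general R S hR hS Sg hSg P hP H hH hchamber
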